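/- For every integer n ≥ 5, max{ SO₅(M_{n,i}) : i ∈ { ⌊c₀n⌋ − 1, ⌊c₀n⌋, ⌈c₀n⌉ } } > SO₅(S_n), where S_n is the star on n vertices. -/

import Mathlib

/-- `f a b = |a² − b²| / (√2 + 2√(a² + b²))`. -/
noncomputable def f (a b : ℝ) : ℝ :=
  |a ^ 2 - b ^ 2| / (Real.sqrt 2 + 2 * Real.sqrt (a ^ 2 + b ^ 2))

theorem f_symm (a b : ℝ) : f a b = f b a := by
  unfold f; rw [abs_sub_comm, add_comm (a ^ 2)]

/-- The Sombor-index-like invariant `SO₅(G) = 2π · Σ_{uv ∈ E(G)} f(d(u), d(v))`. -/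
noncomputable def SO5 {V : Type*} [Fintype V] [DecidableEq V] (G : SimpleGraph V)
    [DecidableRel G.Adj] : ℝ :=
  2 * Real.pi * ∑ e ∈ G.edgeFinset,
    Sym2.lift ⟨fun u v => f (G.degree u) (G.degree v),
      fun u v => f_symm (G.degree u) (G.degree v)⟩ e

/-- `M n k` : the join of the empty graph on `n − k` vertices with the complete graph `K_k`,
realized on `Fin n` with the first `k` vertices forming the clique. -/
def Mgraph (n k : ℕ) : SimpleGraph (Fin n) where
  Adj u v := u ≠ v ∧ ((u : ℕ) < k ∨ (v : ℕ) < k)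
  symm := ⟨fun _ _ ⟨h1, h2⟩ => ⟨h1.symm, h2.symm⟩⟩
  loopless := ⟨fun _ h => h.1 rfl⟩

instance (n k : ℕ) : DecidableRel (Mgraph n k).Adj := fun u v =>
  inferInstanceAs (Decidable (u ≠ v ∧ ((u : ℕ) < k ∨ (v : ℕ) < k)))

/-- The star graph on `n` vertices, realized on `Fin n` with center `⟨0, _⟩`. -/
def starGraph (n : ℕ) : SimpleGraph (Fin n) where
  Adj u v := u ≠ v ∧ ((u : ℕ) = 0 ∨ (v : ℕ) = 0)
  symm := ⟨fun _ _ ⟨h1, h2⟩ => ⟨h1.symm, h2.symm⟩⟩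
  loopless := ⟨fun _ h => h.1 rfl⟩

instance (n : ℕ) : DecidableRel (starGraph n).Adj := fun u v =>
  inferInstanceAs (Decidable (u ≠ v ∧ ((u : ℕ) = 0 ∨ (v : ℕ) = 0)))

/-!
The star is `M_{n,1}`, and in `M_{n,k}` an edge inside the clique joins two vertices of equal
degree and has weight `0`, so `SO₅(M_{n,k}) = 2π k (n - k) f(n - 1, k)`. For `k = ⌈c₀ n⌉` this
grows like `n³`, whereas `SO₅(S_n)` grows like `n²`. Bounding `√2` by `7/5` and `3/2`, and
`√((n - 1)² + k²)` by `n - 1` from below and by `n - 1 + k² / (2(n - 1))` from above, reduces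
the comparison to a polynomial inequality in `n` and `k`. Since `0.365 < c₀ < 0.3651`, it is a
routine polynomial estimate for `n ≥ 12` and is checked case by case for `5 ≤ n ≤ 11`.
-/

open Finset

theorem f_self (a : ℝ) : f a a = 0 := by simp [f]

namespace Mgraph

variable {n k : ℕ}

@[simp]
theorem adj_iff {u v : Fin n} :
    (Mgraph n k).Adj u v ↔ u ≠ v ∧ ((u : ℕ) < k ∨ (v : ℕ) < k) :=
  Iff.rfl

theorem degree_of_lt {u : Fin n} (hu : (u : ℕ) < k) : (Mgraph n k).degree u = n - 1 := by
  have : (Mgraph n k).neighborFinset u = univ.erase u := by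
    ext v
    simp only [SimpleGraph.mem_neighborFinset, adj_iff, mem_erase, mem_univ, and_true]
    exact ⟨fun h => h.1.symm, fun h => ⟨h.symm, Or.inl hu⟩⟩
  rw [← SimpleGraph.card_neighborFinset_eq_degree, this, card_erase_of_mem (mem_univ u),
    card_univ, Fintype.card_fin]

theorem degree_of_le {u : Fin n} (hu : k ≤ (u : ℕ)) : (Mgraph n k).degree u = k := by
  have : (Mgraph n k).neighborFinset u = ({v | (v : ℕ) < k} : Finset (Fin n)) := by
    ext v
    simp only [SimpleGraph.mem_neighborFinset, adj_iff, mem_filter, mem_univ, true_and]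
    constructor
    · rintro ⟨-, h | h⟩ <;> omega
    · intro h; exact ⟨by rintro rfl; omega, Or.inr h⟩
  rw [← SimpleGraph.card_neighborFinset_eq_degree, this, Fin.card_filter_val_lt]
  omega

end Mgraph

theorem starGraph_eq_Mgraph_one (n : ℕ) : starGraph n = Mgraph n 1 := by
  ext u v; simp [starGraph]

theorem SO5_starGraph (n : ℕ) : SO5 (starGraph n) = SO5 (Mgraph n 1) := by
  congr 1
  exact starGraph_eq_Mgraph_one n

theorem SO5_Mgraph {n k : ℕ} (hk : k ≤ n) :
    SO5 (Mgraph n k) = 2 * Real.pi * (k * (n - k) * f ((n - 1 : ℕ) : ℝ) k) := by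
  set clique : Finset (Fin n) := {v | (v : ℕ) < k}
  have mem_clique (v : Fin n) : v ∈ clique ↔ (v : ℕ) < k := by simp [clique]
  set cross := (clique ×ˢ cliqueᶜ).image fun p : Fin n × Fin n => s(p.1, p.2)
  have hsub : cross ⊆ (Mgraph n k).edgeFinset := by
    simp only [cross, subset_iff, mem_image, mem_product, mem_compl, mem_clique,
      SimpleGraph.mem_edgeFinset, forall_exists_index, and_imp]
    rintro _ ⟨a, b⟩ ha hb rfl
    exact ⟨fun h => hb (h ▸ ha), Or.inl ha⟩
  have hinj : Set.InjOn (fun p : Fin n × Fin n => s(p.1, p.2)) ↑(clique ×ˢ cliqueᶜ) := by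
    rintro ⟨a, b⟩ hab ⟨a', b'⟩ hab' h
    simp only [coe_product, Set.mem_prod, mem_coe, mem_compl, mem_clique] at hab hab'
    dsimp only at h
    rcases Sym2.eq_iff.mp h with ⟨rfl, rfl⟩ | ⟨rfl, rfl⟩
    · rfl
    · exact absurd hab.1 hab'.2
  have hcross (p : Fin n × Fin n) (hp : p ∈ clique ×ˢ cliqueᶜ) :
      f ((Mgraph n k).degree p.1) ((Mgraph n k).degree p.2) = f ((n - 1 : ℕ) : ℝ) k := by
    simp only [mem_product, mem_compl, mem_clique, not_lt] at hp
    rw [Mgraph.degree_of_lt hp.1, Mgraph.degree_of_le hp.2]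
  have hcard : #(clique ×ˢ cliqueᶜ) = k * (n - k) := by
    rw [card_product, card_compl, Fin.card_filter_val_lt, Fintype.card_fin, min_eq_right hk]
  have hinside : ∀ e ∈ (Mgraph n k).edgeFinset, e ∉ cross →
      Sym2.lift ⟨fun u v => f ((Mgraph n k).degree u) ((Mgraph n k).degree v),
        fun u v => f_symm _ _⟩ e = 0 := by
    intro e he hout
    induction e using Sym2.ind with
    | _ a b =>
      simp only [SimpleGraph.mem_edgeFinset, SimpleGraph.mem_edgeSet, Mgraph.adj_iff] at he
      simp only [cross, mem_image, mem_product, mem_compl, mem_clique, not_exists, not_and,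
        Prod.forall] at hout
      have ha : (a : ℕ) < k := by
        by_contra ha
        exact hout b a ⟨he.2.resolve_left ha, ha⟩ Sym2.eq_swap
      have hb : (b : ℕ) < k := by
        by_contra hb
        exact hout a b ⟨he.2.resolve_right hb, hb⟩ rfl
      show f _ _ = 0
      rw [Mgraph.degree_of_lt ha, Mgraph.degree_of_lt hb, f_self]
  unfold SO5
  rw [← sum_subset hsub hinside, sum_image hinj, sum_congr rfl fun p hp => by exact hcross p hp,
    sum_const, hcard, nsmul_eq_mul]
  push_cast [hk]
  ring

theorem sqrt_two_mem_Icc : Real.sqrt 2 ∈ Set.Icc (7 / 5 : ℝ) (3 / 2) := by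
  constructor
  · exact Real.le_sqrt_of_sq_le (by norm_num)
  · rw [Real.sqrt_le_left (by norm_num)]; norm_num

theorem f_le_div {x y : ℝ} (hy : 0 ≤ y) (hyx : y ≤ x) :
    f x y ≤ (x ^ 2 - y ^ 2) / (7 / 5 + 2 * x) := by
  have hx : x ≤ Real.sqrt (x ^ 2 + y ^ 2) := Real.le_sqrt_of_sq_le (by nlinarith)
  rw [f, abs_of_nonneg (by nlinarith)]
  exact div_le_div_of_nonneg_left (by nlinarith) (by linarith)
    (by linarith [sqrt_two_mem_Icc.1])

theorem div_le_f {x y : ℝ} (hx : 0 < x) :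
    2 * x * (x ^ 2 - y ^ 2) / (3 * x + 4 * x ^ 2 + 2 * y ^ 2) ≤ f x y := by
  rcases le_or_gt (x ^ 2 - y ^ 2) 0 with hxy | hxy
  · exact (div_nonpos_of_nonpos_of_nonneg (by nlinarith) (by positivity)).trans
      (by unfold f; positivity)
  set s := Real.sqrt (x ^ 2 + y ^ 2)
  have hs : s ^ 2 = x ^ 2 + y ^ 2 := Real.sq_sqrt (by positivity)
  -- `2 x √(x² + y²) ≤ 2 x² + y²` since the difference of the squares is `y⁴`
  have hxs : 2 * x * s ≤ 2 * x ^ 2 + y ^ 2 := by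
    nlinarith [sq_nonneg (2 * x * s - 2 * x ^ 2 - y ^ 2), Real.sqrt_nonneg (x ^ 2 + y ^ 2)]
  have hD : 2 * x * (Real.sqrt 2 + 2 * s) ≤ 3 * x + 4 * x ^ 2 + 2 * y ^ 2 := by
    nlinarith [sqrt_two_mem_Icc.2]
  rw [f, abs_of_pos hxy, div_le_div_iff₀ (by positivity) (by positivity)]
  nlinarith [mul_le_mul_of_nonneg_left hD hxy.le]

theorem mul_f_one_lt_of_poly_lt {N K : ℝ} (hN : 2 ≤ N) (hK : 0 ≤ K) (hKN : K ≤ N)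
    (hP : N * (N - 2) * ((20 * N - 5) * (N - 1) + 10 * K ^ 2)
      < K * (N - K) * ((N - 1) ^ 2 - K ^ 2) * (20 * N - 6)) :
    (N - 1) * f (N - 1) 1 < K * (N - K) * f (N - 1) K := by
  have hKN' : 0 ≤ K * (N - K) := mul_nonneg hK (by linarith)
  calc (N - 1) * f (N - 1) 1
      ≤ (N - 1) * (((N - 1) ^ 2 - 1 ^ 2) / (7 / 5 + 2 * (N - 1))) :=
        mul_le_mul_of_nonneg_left (f_le_div zero_le_one (by linarith)) (by linarith)
    _ < K * (N - K) * (2 * (N - 1) * ((N - 1) ^ 2 - K ^ 2)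
          / (3 * (N - 1) + 4 * (N - 1) ^ 2 + 2 * K ^ 2)) := by
        rw [← mul_div_assoc, ← mul_div_assoc, div_lt_div_iff₀ (by linarith) (by nlinarith)]
        nlinarith [mul_lt_mul_of_pos_left hP (by linarith : (0 : ℝ) < N - 1)]
    _ ≤ K * (N - K) * f (N - 1) K := mul_le_mul_of_nonneg_left (div_le_f (by linarith)) hKN'

theorem quintic_root_bounds {c : ℝ} (hc : c ∈ Set.Ioo 0 1)
    (hroot : 6 * c ^ 5 - 4 * c ^ 4 + 6 * c ^ 3 - 6 * c ^ 2 - 4 * c + 2 = 0) :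
    0.365 < c ∧ c < 0.3651 := by
  obtain ⟨hc0, hc1⟩ := hc
  have hq : 3 * c ^ 4 + c ^ 3 + 4 * c ^ 2 + c - 1 = 0 := by
    have h : 2 * (c - 1) * (3 * c ^ 4 + c ^ 3 + 4 * c ^ 2 + c - 1) = 0 := by
      rw [← hroot]; ring
    exact (mul_eq_zero.mp h).resolve_left (by nlinarith)
  -- the quartic factor is increasing on `c > 0` and changes sign between the two bounds
  constructor <;> by_contra! h
  · nlinarith [pow_le_pow_left₀ hc0.le h 2, pow_le_pow_left₀ hc0.le h 3,
      pow_le_pow_left₀ hc0.le h 4]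
  · nlinarith [pow_le_pow_left₀ (by norm_num) h 2, pow_le_pow_left₀ (by norm_num) h 3,
      pow_le_pow_left₀ (by norm_num) h 4]

theorem ceil_mul_bounds {c : ℝ} (hc : 0.365 < c ∧ c < 0.3651) (n : ℕ) :
    365 * n ≤ 1000 * ⌈c * n⌉₊ ∧ 10000 * ⌈c * n⌉₊ < 3651 * n + 10000 := by
  have hn : (0 : ℝ) ≤ n := n.cast_nonneg
  have hle : c * n ≤ ⌈c * n⌉₊ := Nat.le_ceil _
  have hlt : (⌈c * n⌉₊ : ℝ) < c * n + 1 := Nat.ceil_lt_add_one (by nlinarith)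
  constructor
  · exact_mod_cast (show (365 * n : ℝ) ≤ 1000 * ⌈c * n⌉₊ by nlinarith)
  · exact_mod_cast (show (10000 * ⌈c * n⌉₊ : ℝ) < 3651 * n + 10000 by nlinarith)

theorem poly_star_lt_poly_Mgraph_of_twelve_le {N K : ℝ} (hN : 12 ≤ N) (hlo : 0.365 * N ≤ K)
    (hhi : K ≤ 0.3651 * N + 1) :
    N * (N - 2) * ((20 * N - 5) * (N - 1) + 10 * K ^ 2)
      < K * (N - K) * ((N - 1) ^ 2 - K ^ 2) * (20 * N - 6) := by
  have hA : 0 ≤ K - 0.365 * N := by linarith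
  have hB : 0 ≤ 0.3651 * N + 1 - K := by linarith
  have hC : 0 ≤ N - 12 := by linarith
  have hN0 : 0 ≤ N := by linarith
  nlinarith [mul_nonneg hA hB, mul_nonneg (mul_nonneg hA hB) hN0,
    mul_nonneg (mul_nonneg (mul_nonneg hA hB) hN0) hN0,
    mul_nonneg (mul_nonneg hA hC) hN0,
    mul_nonneg (mul_nonneg (mul_nonneg hA hC) hN0) hN0,
    mul_nonneg (mul_nonneg (mul_nonneg hB hC) hN0) hN0,
    mul_nonneg (mul_nonneg (mul_nonneg hC hC) hN0) hN0,
    mul_nonneg (mul_nonneg hA hA) hN0, mul_nonneg (mul_nonneg hB hB) hN0]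

theorem poly_star_lt_poly_Mgraph {n k : ℕ} (hn : 5 ≤ n) (hlo : 365 * n ≤ 1000 * k)
    (hhi : 10000 * k < 3651 * n + 10000) :
    (n : ℝ) * (n - 2) * ((20 * n - 5) * (n - 1) + 10 * k ^ 2)
      < k * (n - k) * ((n - 1) ^ 2 - k ^ 2) * (20 * n - 6) := by
  rcases lt_or_ge n 12 with hn12 | hn12
  · obtain ⟨hk2, hk6⟩ : 2 ≤ k ∧ k < 6 := by omega
    interval_cases n <;> interval_cases k <;> first | omega | norm_num
  · apply poly_star_lt_poly_Mgraph_of_twelve_le (by exact_mod_cast hn12)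
    · have : ((365 * n : ℕ) : ℝ) ≤ ((1000 * k : ℕ) : ℝ) := by exact_mod_cast hlo
      push_cast at this; linarith
    · have : ((10000 * k : ℕ) : ℝ) < ((3651 * n + 10000 : ℕ) : ℝ) := by exact_mod_cast hhi
      push_cast at this; linarith

/-- For `n ≥ 5` the maximum of `SO₅(M_{n,i})` over `i ∈ {⌊c₀n⌋ − 1, ⌊c₀n⌋, ⌈c₀n⌉}`
strictly exceeds `SO₅(S_n)`, where `c₀` is the unique root in `(0,1)` of
`6c⁵ − 4c⁴ + 6c³ − 6c² − 4c + 2 = 0`. -/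
theorem max_SO5_Mgraph_gt_star (n : ℕ) (hn : 5 ≤ n)
    (c₀ : ℝ) (hc₀ : c₀ ∈ Set.Ioo (0 : ℝ) 1)
    (hroot : 6 * c₀ ^ 5 - 4 * c₀ ^ 4 + 6 * c₀ ^ 3 - 6 * c₀ ^ 2 - 4 * c₀ + 2 = 0) :
    max (SO5 (Mgraph n (⌊c₀ * n⌋₊ - 1)))
      (max (SO5 (Mgraph n ⌊c₀ * n⌋₊)) (SO5 (Mgraph n ⌈c₀ * n⌉₊))) > SO5 (starGraph n) := by
  obtain ⟨hlo, hhi⟩ := ceil_mul_bounds (quintic_root_bounds hc₀ hroot) n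
  set k := ⌈c₀ * n⌉₊
  have hkn : k ≤ n := by omega
  refine lt_max_of_lt_right (lt_max_of_lt_right ?_)
  rw [SO5_starGraph, SO5_Mgraph (by omega), SO5_Mgraph hkn, Nat.cast_pred (by omega)]
  have key := mul_f_one_lt_of_poly_lt (by norm_num; omega) (Nat.cast_nonneg k)
    (by exact_mod_cast hkn) (poly_star_lt_poly_Mgraph hn hlo hhi)
  push_cast
  gcongr 2 * Real.pi * ?_
  simpa using key
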